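/- Let k be a field, 𝒜 a finite-dimensional category, and 𝒞 := Mod-𝒜. Let F, G : 𝒞 ⥤ 𝒞 be sweet endofunctors, i.e. k-linear functors each admitting a biadjoint (a functor that is simultaneously left and right adjoint to it). Let η : F ⟶ G be a natural transformation such that η_L : F(L) → G(L) is an isomorphism for every simple object L of 𝒞. Then η is an isomorphism, i.e. η_V is an isomorphism for every object V of 𝒞. -/

import Mathlib

open CategoryTheory CategoryTheory.Limits Opposite

section
variable (k : Type) [Field k]

/-- `k`-linearity on the opposite category. -/
instance oppositeLinear (C : Type*) [Category C] [Preadditive C] [CategoryTheory.Linear k C] :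
    CategoryTheory.Linear k Cᵒᵖ where
  homModule X Y := Equiv.module k (opEquiv X Y)
  smul_comp _ _ _ _ _ _ :=
    Quiver.Hom.unop_inj (CategoryTheory.Linear.comp_smul _ _ _ _ _ _)
  comp_smul _ _ _ _ _ _ :=
    Quiver.Hom.unop_inj (CategoryTheory.Linear.smul_comp _ _ _ _ _ _)

@[simp] lemma unop_ksmul {C : Type*} [Category C] [Preadditive C]
    [CategoryTheory.Linear k C] {X Y : Cᵒᵖ} (r : k) (f : X ⟶ Y) :
    (r • f).unop = r • f.unop := rfl

/-- The property of a functor between `k`-linear categories being `k`-linear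
(in particular additive). -/
def IsKLinear {C D : Type*} [Category C] [Category D] [Preadditive C] [Preadditive D]
    [CategoryTheory.Linear k C] [CategoryTheory.Linear k D] (F : C ⥤ D) : Prop :=
  ∃ h : F.Additive, Functor.Linear k F

/-- The category `Mod-A` of right modules over a small `k`-linear category `A`:
`k`-linear functors `Aᵒᵖ ⥤ ModuleCat k`. -/
abbrev RMod (A : Type) [SmallCategory A] [Preadditive A] [CategoryTheory.Linear k A] :=
  ObjectProperty.FullSubcategory (fun F : Aᵒᵖ ⥤ ModuleCat.{0} k => IsKLinear k F)

/-- The category `A-Mod` of left modules over a small `k`-linear category `A`: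
`k`-linear functors `A ⥤ ModuleCat k`. -/
abbrev LMod (A : Type) [SmallCategory A] [Preadditive A] [CategoryTheory.Linear k A] :=
  ObjectProperty.FullSubcategory (fun F : A ⥤ ModuleCat.{0} k => IsKLinear k F)

variable {k}

instance linYonObjLinear {C : Type*} [Category C] [Preadditive C] [CategoryTheory.Linear k C]
    (x : C) : ((linearYoneda k C).obj x).Linear k where
  map_smul f r := by
    ext (g : _ ⟶ x)
    exact CategoryTheory.Linear.smul_comp _ _ _ _ _ _

instance linCoyonObjLinear {C : Type*} [Category C] [Preadditive C] [CategoryTheory.Linear k C]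
    (x : Cᵒᵖ) : ((linearCoyoneda k C).obj x).Linear k where
  map_smul f r := by
    ext (g : x.unop ⟶ _)
    exact CategoryTheory.Linear.comp_smul _ _ _ _ _ _

variable (k)
variable (A : Type) [SmallCategory A] [Preadditive A] [CategoryTheory.Linear k A]

/-- The representable right `A`-module `Hom_A(−, x)`. -/
def reprR (x : A) : RMod k A :=
  ⟨(linearYoneda k A).obj x, inferInstance, inferInstance⟩

/-- The representable left `A`-module `Hom_A(x, −)`. -/
def reprL (x : A) : LMod k A :=
  ⟨(linearCoyoneda k A).obj (op x), inferInstance, inferInstance⟩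

/-- An endofunctor is sweet if it admits a biadjoint, i.e. a functor that is
simultaneously left and right adjoint to it. -/
def IsSweet {C : Type*} [Category C] (E : C ⥤ C) : Prop :=
  ∃ F : C ⥤ C, Nonempty (F ⊣ E) ∧ Nonempty (E ⊣ F)

/-!
Let `F'`, `G'` be the biadjoints and `θ : G' ⟶ F'` the conjugate of `η` with respect to
`F' ⊣ F` and `G' ⊣ G`. Through these adjunctions, precomposition with `θ_X` corresponds to
postcomposition with `η`: so `η_S` invertible for a simple `S` makes
`θ_P^* : Hom(F' P, S) → Hom(G' P, S)` bijective, and conversely, once `θ_P` is invertible for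
every representable `P = Hom(-, x)`, Yoneda makes every component `(η_V)_x` bijective.

Since `F` and `G` are left adjoints they preserve colimits and epimorphisms, so
`Hom(F' P, -) ≅ F(-)(x)` and `Hom(G' P, -) ≅ G(-)(x)` commute with filtered colimits (hence
`F' P`, `G' P` are finitely generated, being the union of their finitely generated submodules)
and `F' P` is projective. Finally, a morphism
`θ : N ⟶ M` of finitely generated modules with `M` projective which induces bijections
`Hom(M, S) ≅ Hom(N, S)` for all simple `S` is an isomorphism: a nonzero finitely generated module
has a simple quotient (Zorn), so the cokernel of `θ` vanishes; then `θ` splits, and its kernel, a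
finitely generated direct summand of `N` admitting no nonzero map to a simple module, vanishes too.
-/

section Conjugate

variable {C D : Type*} [Category C] [Category D] {L₁ L₂ : C ⥤ D} {R₁ R₂ : D ⥤ C}
  (adj₁ : L₁ ⊣ R₁) (adj₂ : L₂ ⊣ R₂) (α : R₁ ⟶ R₂)

lemma homEquiv_conjugateEquiv_symm_app_comp (c : C) {d : D} (r : L₁.obj c ⟶ d) :
    adj₂.homEquiv c d (((conjugateEquiv adj₁ adj₂).symm α).app c ≫ r) =
      adj₁.homEquiv c d r ≫ α.app d := by
  rw [Adjunction.homEquiv_unit, Adjunction.homEquiv_unit, Functor.map_comp, ← Category.assoc,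
    ← unit_conjugateEquiv_symm, Category.assoc, Category.assoc, α.naturality]

lemma bijective_conjugateEquiv_symm_app_comp_iff (c : C) (d : D) :
    Function.Bijective
        (fun r : L₁.obj c ⟶ d => ((conjugateEquiv adj₁ adj₂).symm α).app c ≫ r) ↔
      Function.Bijective fun r : c ⟶ R₁.obj d => r ≫ α.app d := by
  have : (fun r : L₁.obj c ⟶ d => ((conjugateEquiv adj₁ adj₂).symm α).app c ≫ r) =
      (adj₂.homEquiv c d).symm ∘ (fun r : c ⟶ R₁.obj d => r ≫ α.app d) ∘
        adj₁.homEquiv c d := by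
    funext r
    exact (Equiv.eq_symm_apply _).2 (homEquiv_conjugateEquiv_symm_app_comp adj₁ adj₂ α c r)
  rw [this, EquivLike.comp_bijective, EquivLike.bijective_comp]

end Conjugate

namespace RMod

variable {k A}

abbrev _root_.CategoryTheory.InducedCategory.Hom.app {M N : RMod k A}
    (f : @InducedCategory.Hom (RMod k A) (Aᵒᵖ ⥤ ModuleCat.{0} k) _
      ObjectProperty.FullSubcategory.obj M N) (x : Aᵒᵖ) :
    M.obj.obj x →ₗ[k] N.obj.obj x :=
  (f.hom.app x).hom

abbrev Elements (M : RMod k A) : Type := Σ x : Aᵒᵖ, M.obj.obj x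

def homMk {M N : RMod k A} (app : ∀ x, M.obj.obj x →ₗ[k] N.obj.obj x)
    (naturality : ∀ ⦃x y : Aᵒᵖ⦄ (f : x ⟶ y),
      (app y).comp (M.obj.map f).hom = (N.obj.map f).hom.comp (app x)) : M ⟶ N :=
  ⟨{ app x := ModuleCat.ofHom (app x)
     naturality _ _ f := ModuleCat.hom_ext (naturality f) }⟩

@[ext] lemma hom_ext {M N : RMod k A} {f g : M ⟶ N} (h : ∀ x, f.app x = g.app x) : f = g :=
  InducedCategory.hom_ext (NatTrans.ext (funext fun x => ModuleCat.hom_ext (h x)))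

lemma comp_app_apply {M N P : RMod k A} (f : M ⟶ N) (g : N ⟶ P) {x : Aᵒᵖ}
    (m : M.obj.obj x) : (f ≫ g).app x m = g.app x (f.app x m) := rfl

@[simp] lemma id_app (M : RMod k A) (x : Aᵒᵖ) : (𝟙 M : M ⟶ M).app x = LinearMap.id := rfl

@[simp] lemma zero_app (M N : RMod k A) (x : Aᵒᵖ) : (0 : M ⟶ N).app x = 0 := rfl

lemma obj_map_add (M : RMod k A) {x y : Aᵒᵖ} (f g : x ⟶ y) :
    M.obj.map (f + g) = M.obj.map f + M.obj.map g :=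
  have := M.property.1; Functor.map_add ..

lemma obj_map_smul (M : RMod k A) {x y : Aᵒᵖ} (r : k) (f : x ⟶ y) :
    M.obj.map (r • f) = r • M.obj.map f :=
  have := M.property.2; Functor.Linear.map_smul ..

lemma naturality_apply {M N : RMod k A} (f : M ⟶ N) {x y : Aᵒᵖ} (g : x ⟶ y)
    (m : M.obj.obj x) : f.app y (M.obj.map g m) = N.obj.map g (f.app x m) :=
  ConcreteCategory.congr_hom (f.hom.naturality g) m

lemma hom_eq_zero_iff {M N : RMod k A} (f : M ⟶ N) : f = 0 ↔ ∀ x m, f.app x m = 0 :=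
  ⟨fun h x m => by simp [h], fun h => hom_ext fun x => LinearMap.ext (h x)⟩

lemma isIso_of_bijective {M N : RMod k A} (f : M ⟶ N)
    (h : ∀ x, Function.Bijective (f.app x)) : IsIso f := by
  have (x : Aᵒᵖ) : IsIso (f.hom.app x) := (ConcreteCategory.isIso_iff_bijective _).2 (h x)
  have : IsIso ((ObjectProperty.ι _).map f) := NatIso.isIso_of_isIso_app f.hom
  exact isIso_of_fully_faithful (ObjectProperty.ι _) f

lemma epi_of_surjective {M N : RMod k A} (f : M ⟶ N)
    (h : ∀ x, Function.Surjective (f.app x)) : Epi f where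
  left_cancellation g g' hgg' := hom_ext fun x => LinearMap.ext fun n => by
    obtain ⟨m, rfl⟩ := h x n
    exact LinearMap.congr_fun (congrArg (·.app x) hgg') m

@[ext] structure Submod (M : RMod k A) where
  obj : ∀ x : Aᵒᵖ, Submodule k (M.obj.obj x)
  map_mem : ∀ {x y : Aᵒᵖ} (f : x ⟶ y) {m : M.obj.obj x},
    m ∈ obj x → M.obj.map f m ∈ obj y

namespace Submod

variable {M N : RMod k A}

instance : PartialOrder (Submod M) :=
  PartialOrder.lift Submod.obj fun _ _ => Submod.ext

instance : OrderTop (Submod M) where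
  top := ⟨fun _ => ⊤, fun _ _ _ => trivial⟩
  le_top _ _ := le_top

instance : OrderBot (Submod M) where
  bot := ⟨fun _ => ⊥, fun f _ hm => by simp [(Submodule.mem_bot k).1 hm]⟩
  bot_le _ _ := bot_le

lemma eq_top_iff_forall_mem {U : Submod M} : U = ⊤ ↔ ∀ x m, m ∈ U.obj x :=
  ⟨fun h _ _ => h ▸ trivial, fun h => top_le_iff.1 fun x m _ => h x m⟩

def range (f : M ⟶ N) : Submod N where
  obj x := LinearMap.range (f.app x)
  map_mem {_ _} g := by
    rintro _ ⟨m, rfl⟩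
    exact ⟨_, naturality_apply f g m⟩

lemma range_le_range_of_comp_eq {P : RMod k A} {g : P ⟶ M} {f : M ⟶ N} {h : P ⟶ N}
    (hgf : g ≫ f = h) : range h ≤ range f := by
  rintro x _ ⟨m, rfl⟩
  exact ⟨g.app x m, by rw [← hgf]; rfl⟩

def ker (f : M ⟶ N) : Submod M where
  obj x := LinearMap.ker (f.app x)
  map_mem {_ _} g {m} hm := by
    simp only [LinearMap.mem_ker] at hm ⊢
    rw [naturality_apply, hm, map_zero]

def comap (f : M ⟶ N) (V : Submod N) : Submod M where
  obj x := (V.obj x).comap (f.app x)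
  map_mem {_ _} g {m} hm := by
    rw [Submodule.mem_comap, naturality_apply]
    exact V.map_mem g hm

def generate (s : Finset M.Elements) : Submod M where
  obj y := Submodule.span k {m | ∃ p ∈ s, ∃ f : p.1 ⟶ y, M.obj.map f p.2 = m}
  map_mem {x y} f {m} hm := by
    refine Submodule.span_induction ?_ ?_ ?_ ?_ hm
    · rintro _ ⟨p, hp, g, rfl⟩
      exact Submodule.subset_span ⟨p, hp, g ≫ f, by simp⟩
    · simp
    · intro a b _ _ ha hb
      simpa using add_mem ha hb
    · intro r a _ ha
      simpa using Submodule.smul_mem _ r ha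

lemma mem_generate {s : Finset M.Elements} {p : M.Elements} (hp : p ∈ s) :
    p.2 ∈ (generate s).obj p.1 :=
  Submodule.subset_span ⟨p, hp, 𝟙 p.1, by simp⟩

lemma generate_le {s : Finset M.Elements} {U : Submod M} :
    generate s ≤ U ↔ ∀ p ∈ s, p.2 ∈ U.obj p.1 := by
  refine ⟨fun h p hp => h _ (mem_generate hp), fun h x => Submodule.span_le.2 ?_⟩
  rintro _ ⟨p, hp, f, rfl⟩
  exact U.map_mem f (h p hp)

lemma generate_mono {s t : Finset M.Elements} (h : s ⊆ t) : generate s ≤ generate t :=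
  generate_le.2 fun _ hp => mem_generate (h hp)

lemma directed_obj {ι : Type*} {U : ι → Submod M} (hU : Directed (· ≤ ·) U) (x : Aᵒᵖ) :
    Directed (· ≤ ·) fun i => (U i).obj x :=
  Directed.mono_comp (· ≤ ·) (g := fun V : Submod M => V.obj x) (fun _ _ h => h x) hU

def directedSup {ι : Type*} [Nonempty ι] (U : ι → Submod M) (hU : Directed (· ≤ ·) U) :
    Submod M where
  obj x := ⨆ i, (U i).obj x
  map_mem {x _} f {_} hm := by
    obtain ⟨i, hi⟩ := (Submodule.mem_iSup_of_directed _ (directed_obj hU x)).1 hm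
    exact Submodule.mem_iSup_of_mem i ((U i).map_mem f hi)

lemma mem_directedSup {ι : Type*} [Nonempty ι] {U : ι → Submod M} (hU : Directed (· ≤ ·) U)
    {x : Aᵒᵖ} {m : M.obj.obj x} : m ∈ (directedSup U hU).obj x ↔ ∃ i, m ∈ (U i).obj x :=
  Submodule.mem_iSup_of_directed _ (directed_obj hU x)

lemma le_directedSup {ι : Type*} [Nonempty ι] {U : ι → Submod M} (hU : Directed (· ≤ ·) U)
    (i : ι) : U i ≤ directedSup U hU :=
  fun _ _ hm => (mem_directedSup hU).2 ⟨i, hm⟩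

def toRMod (U : Submod M) : RMod k A where
  obj :=
    { obj x := ModuleCat.of k (U.obj x)
      map f := ModuleCat.ofHom ((M.obj.map f).hom.restrict fun _ => U.map_mem f) }
  property :=
    ⟨⟨fun {_ _ f g} => by ext m; simp [obj_map_add M f g]⟩,
     ⟨fun f r => by ext m; simp [obj_map_smul M r f]⟩⟩

def ι (U : Submod M) : U.toRMod ⟶ M :=
  homMk (fun x => (U.obj x).subtype) fun _ _ _ => rfl

instance (U : Submod M) : Mono U.ι where
  right_cancellation _ _ h := hom_ext fun x => LinearMap.ext fun m =>
    Subtype.ext (LinearMap.congr_fun (congrArg (·.app x) h) m)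

def lift (U : Submod M) (f : N ⟶ M) (hf : ∀ x m, f.app x m ∈ U.obj x) : N ⟶ U.toRMod :=
  homMk (fun x => (f.app x).codRestrict (U.obj x) (hf x))
    fun _ _ g => LinearMap.ext fun m => Subtype.ext (naturality_apply f g m)

@[simp]
lemma lift_ι (U : Submod M) (f : N ⟶ M) (hf : ∀ x m, f.app x m ∈ U.obj x) :
    U.lift f hf ≫ U.ι = f := rfl

lemma eq_top_of_comp_ι_eq_id {U : Submod M} {σ : M ⟶ U.toRMod} (h : σ ≫ U.ι = 𝟙 M) :
    U = ⊤ :=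
  eq_top_iff_forall_mem.2 fun x m => by
    rw [← show (σ ≫ U.ι).app x m = m by rw [h]; rfl]
    exact (σ.app x m).2

def inclusion {U V : Submod M} (h : U ≤ V) : U.toRMod ⟶ V.toRMod :=
  V.lift U.ι fun x m => h x m.2

@[simp]
lemma inclusion_ι {U V : Submod M} (h : U ≤ V) : inclusion h ≫ V.ι = U.ι := rfl

def quotient (U : Submod M) : RMod k A where
  obj :=
    { obj x := ModuleCat.of k (M.obj.obj x ⧸ U.obj x)
      map {x y} f := ModuleCat.ofHom ((U.obj x).mapQ (U.obj y) (M.obj.map f).hom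
        fun _ => U.map_mem f)
      map_id x := by ext m; simp
      map_comp f g := by ext m; simp }
  property :=
    ⟨⟨fun {_ _ f g} => by ext m; simp [obj_map_add M f g]⟩,
     ⟨fun f r => by ext m; simp [obj_map_smul M r f]⟩⟩

def π (U : Submod M) : M ⟶ U.quotient :=
  homMk (fun x => (U.obj x).mkQ) fun _ _ _ => rfl

lemma π_surjective (U : Submod M) (x : Aᵒᵖ) : Function.Surjective (U.π.app x) :=
  Submodule.mkQ_surjective _

lemma π_app_eq_zero_iff (U : Submod M) {x : Aᵒᵖ} (m : M.obj.obj x) :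
    U.π.app x m = 0 ↔ m ∈ U.obj x :=
  Submodule.Quotient.mk_eq_zero _

lemma π_eq_zero_iff (U : Submod M) : U.π = 0 ↔ U = ⊤ := by
  simp only [hom_eq_zero_iff, π_app_eq_zero_iff, eq_top_iff_forall_mem]

end Submod

open Submod

lemma surjective_app_of_epi {M N : RMod k A} (f : M ⟶ N) [Epi f] (x : Aᵒᵖ) :
    Function.Surjective (f.app x) := by
  let U := range f
  have hπ : U.π = 0 := by
    refine (cancel_epi f).1 ?_
    rw [comp_zero, hom_eq_zero_iff]
    exact fun _ m => (U.π_app_eq_zero_iff _).2 ⟨m, rfl⟩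
  exact eq_top_iff_forall_mem.1 (U.π_eq_zero_iff.1 hπ) x

lemma injective_app_of_mono {M N : RMod k A} (f : M ⟶ N) [Mono f] (x : Aᵒᵖ) :
    Function.Injective (f.app x) := by
  let K := ker f
  have hK : K.ι = 0 := by
    refine (cancel_mono f).1 ?_
    rw [zero_comp, hom_eq_zero_iff]
    exact fun _ m => m.2
  refine (injective_iff_map_eq_zero _).2 fun m hm => ?_
  exact LinearMap.congr_fun (congrArg (·.app x) hK) ⟨m, hm⟩

def FG (M : RMod k A) : Prop :=
  ∃ s : Finset M.Elements, generate s = ⊤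

lemma FG.of_surjective {M N : RMod k A} (f : M ⟶ N) (hf : ∀ x, Function.Surjective (f.app x))
    (hM : FG M) : FG N := by
  classical
  obtain ⟨s, hs⟩ := hM
  let t := s.image fun p => (⟨p.1, f.app p.1 p.2⟩ : N.Elements)
  have hst : generate s ≤ comap f (generate t) :=
    generate_le.2 fun p hp => mem_generate (p := ⟨p.1, f.app p.1 p.2⟩)
      (Finset.mem_image_of_mem _ hp)
  refine ⟨t, eq_top_iff_forall_mem.2 fun x n => ?_⟩
  obtain ⟨m, rfl⟩ := hf x n
  exact hst x (hs ▸ trivial : m ∈ _)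

lemma FG.of_comp_eq_id {M N : RMod k A} {i : M ⟶ N} {r : N ⟶ M} (h : i ≫ r = 𝟙 M)
    (hN : FG N) : FG M :=
  hN.of_surjective r fun x m => ⟨i.app x m, by rw [← comp_app_apply, h]; rfl⟩

lemma FG.directedSup_ne_top {M : RMod k A} (hM : FG M) {ι : Type*} [Nonempty ι]
    {U : ι → Submod M} (hU : Directed (· ≤ ·) U) (h : ∀ i, U i ≠ ⊤) :
    directedSup U hU ≠ ⊤ := by
  obtain ⟨s, hs⟩ := hM
  intro htop
  obtain ⟨i, hi⟩ := Directed.exists_mem_subset_of_finset_subset_biUnion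
    (Directed.mono_comp (· ≤ ·)
      (g := fun V : Submod M => {p : M.Elements | p.2 ∈ V.obj p.1})
      (fun _ _ h _ hp => h _ hp) hU) (s := s)
    fun p _ => Set.mem_iUnion.2 ((mem_directedSup hU).1 (htop ▸ trivial))
  exact h i (top_le_iff.1 (hs ▸ generate_le.2 fun p hp => hi hp))

lemma FG.exists_isCoatom_ge {M : RMod k A} (hM : FG M) {U : Submod M} (hU : U ≠ ⊤) :
    ∃ V, U ≤ V ∧ IsCoatom V := by
  obtain ⟨V, hUV, hV⟩ := zorn_le_nonempty₀ {V : Submod M | V ≠ ⊤}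
    (fun c hc hchain W hW =>
      have : Nonempty c := ⟨⟨W, hW⟩⟩
      ⟨_, hM.directedSup_ne_top hchain.directed fun V => hc V.2,
        fun V hV => le_directedSup hchain.directed ⟨V, hV⟩⟩) U hU
  exact ⟨V, hUV, hV.prop, fun W hVW => not_not.1 (hV.not_prop_of_gt hVW)⟩

lemma simple_quotient {M : RMod k A} {U : Submod M} (hU : IsCoatom U) :
    Simple U.quotient where
  mono_isIso_iff_nonzero {Y} f _ := by
    refine ⟨fun _ hf => hU.1 (U.π_eq_zero_iff.1 ?_), fun hf => ?_⟩
    · rw [← Category.comp_id U.π, ← IsIso.inv_hom_id f]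
      simp only [hf, comp_zero]
    let V := comap U.π (range f)
    have hUV : U ≤ V := fun x m hm => ⟨0, by simp [(U.π_app_eq_zero_iff m).2 hm]⟩
    have hV : V = ⊤ := by
      refine hU.2 V (lt_of_le_of_ne hUV fun hVU => hf ((hom_eq_zero_iff f).2 fun x y => ?_))
      obtain ⟨m, hm⟩ := U.π_surjective x (f.app x y)
      have : m ∈ V.obj x := ⟨y, hm.symm⟩
      rw [← hm, U.π_app_eq_zero_iff, hVU]
      exact this
    refine isIso_of_bijective f fun x => ⟨injective_app_of_mono f x, fun q => ?_⟩
    obtain ⟨m, rfl⟩ := U.π_surjective x q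
    exact (hV ▸ trivial : m ∈ V.obj x)

lemma exists_simple_quotient {M : RMod k A} (hM : FG M) {U : Submod M} (hU : U ≠ ⊤) :
    ∃ (S : RMod k A) (s : M ⟶ S), Simple S ∧ s ≠ 0 ∧
      ∀ x, ∀ m ∈ U.obj x, s.app x m = 0 := by
  obtain ⟨V, hUV, hV⟩ := hM.exists_isCoatom_ge hU
  exact ⟨V.quotient, V.π, simple_quotient hV, fun h => hV.1 (V.π_eq_zero_iff.1 h),
    fun x m hm => (V.π_app_eq_zero_iff m).2 (hUV x hm)⟩

def yonedaEquiv (x : A) (M : RMod k A) : (reprR k A x ⟶ M) ≃ M.obj.obj (op x) where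
  toFun α := α.app (op x) (𝟙 x)
  invFun m := homMk
    (fun y =>
      { toFun f := M.obj.map (f : unop y ⟶ x).op m
        map_add' f g := by
          rw [show ((f + g : unop y ⟶ x)).op = f.op + g.op from rfl, obj_map_add]; rfl
        map_smul' r f := by
          rw [show ((r • f : unop y ⟶ x)).op = r • f.op from rfl, obj_map_smul]; rfl })
    fun y y' g => LinearMap.ext fun f => by
      change M.obj.map ((f : unop y ⟶ x).op ≫ g) m = _
      rw [Functor.map_comp]; rfl
  left_inv α := hom_ext fun y => LinearMap.ext fun f => by
    change M.obj.map (f : unop y ⟶ x).op (α.app (op x) (𝟙 x)) = α.app y f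
    exact (naturality_apply α (f : unop y ⟶ x).op (𝟙 x)).symm.trans
      (congrArg (α.app y) (Category.comp_id (f : unop y ⟶ x)))
  right_inv m := by
    change M.obj.map (𝟙 (op x)) m = m
    simp

lemma yonedaEquiv_comp {x : A} {M N : RMod k A} (α : reprR k A x ⟶ M) (f : M ⟶ N) :
    yonedaEquiv x N (α ≫ f) = f.app (op x) (yonedaEquiv x M α) := rfl

lemma bijective_app_iff {M N : RMod k A} (f : M ⟶ N) (x : A) :
    Function.Bijective (f.app (op x)) ↔
      Function.Bijective fun α : reprR k A x ⟶ M => α ≫ f := by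
  have : (fun α : reprR k A x ⟶ M => α ≫ f) =
      (yonedaEquiv x N).symm ∘ f.app (op x) ∘ yonedaEquiv x M := by
    funext α
    exact ((yonedaEquiv x N).symm_apply_apply _).symm.trans
      (congrArg _ (yonedaEquiv_comp α f))
  rw [this, EquivLike.comp_bijective, EquivLike.bijective_comp]

instance projective_reprR (x : A) : Projective (reprR k A x) where
  factors {E X} f e _ := by
    obtain ⟨m, hm⟩ := surjective_app_of_epi e (op x) (yonedaEquiv x X f)
    exact ⟨(yonedaEquiv x E).symm m, (yonedaEquiv x X).injective (by
      rw [yonedaEquiv_comp, Equiv.apply_symm_apply, hm])⟩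

section GenerateColimit

variable (M : RMod k A)

abbrev generateDiagram : Finset M.Elements ⥤ RMod k A where
  obj s := (generate s).toRMod
  map h := inclusion (generate_mono (leOfHom h))
  map_id _ := (cancel_mono (generate _).ι).1 (by simp)
  map_comp _ _ := (cancel_mono (generate _).ι).1 (by simp)

def generateCocone : Cocone (generateDiagram M) where
  pt := M
  ι := { app s := (generate s).ι }

variable {M}

lemma cocone_ι_app_eq_of_le (c : Cocone (generateDiagram M)) {x : Aᵒᵖ} {m : M.obj.obj x}
    {s t : Finset M.Elements} (hst : s ≤ t) (hs : m ∈ (generate s).obj x) :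
    (c.ι.app s).app x ⟨m, hs⟩ = (c.ι.app t).app x ⟨m, generate_mono hst x hs⟩ :=
  LinearMap.congr_fun (congrArg (·.app x) (c.w (homOfLE hst))).symm ⟨m, hs⟩

lemma mem_generate_singleton {x : Aᵒᵖ} (m : M.obj.obj x) :
    m ∈ (generate ({⟨x, m⟩} : Finset M.Elements)).obj x :=
  mem_generate (Finset.mem_singleton_self _)

def coconeValue (c : Cocone (generateDiagram M)) {x : Aᵒᵖ} (m : M.obj.obj x) : c.pt.obj.obj x :=
  (c.ι.app {⟨x, m⟩}).app x ⟨m, mem_generate_singleton m⟩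

lemma coconeValue_eq (c : Cocone (generateDiagram M)) {x : Aᵒᵖ} {m : M.obj.obj x}
    {s : Finset M.Elements} (hs : m ∈ (generate s).obj x) :
    coconeValue c m = (c.ι.app s).app x ⟨m, hs⟩ := by
  classical
  exact (cocone_ι_app_eq_of_le c Finset.subset_union_left _).trans
    (cocone_ι_app_eq_of_le c Finset.subset_union_right hs).symm

def generateCoconeDesc (c : Cocone (generateDiagram M)) : M ⟶ c.pt :=
  homMk (fun x =>
    { toFun := coconeValue c
      map_add' m m' := by
        classical
        let s : Finset M.Elements := {⟨x, m⟩, ⟨x, m'⟩}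
        have hm : m ∈ (generate s).obj x := mem_generate (Finset.mem_insert_self _ _)
        have hm' : m' ∈ (generate s).obj x :=
          mem_generate (Finset.mem_insert_of_mem (Finset.mem_singleton_self _))
        rw [coconeValue_eq c (add_mem hm hm'), coconeValue_eq c hm, coconeValue_eq c hm']
        exact map_add ((c.ι.app s).app x) ⟨m, hm⟩ ⟨m', hm'⟩
      map_smul' r m := by
        rw [coconeValue_eq c (Submodule.smul_mem _ r (mem_generate_singleton m))]
        exact map_smul ((c.ι.app _).app x) r ⟨m, _⟩ })
    fun x y g => LinearMap.ext fun m => by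
      change coconeValue c _ = c.pt.obj.map g (coconeValue c m)
      rw [coconeValue_eq c (map_mem _ g (mem_generate_singleton m))]
      exact naturality_apply (c.ι.app _) g ⟨m, _⟩

variable (M) in
def isColimitGenerateCocone : IsColimit (generateCocone M) where
  desc := generateCoconeDesc
  fac c _ := hom_ext fun _ => LinearMap.ext fun m => coconeValue_eq c m.2
  uniq _ _ hf := hom_ext fun x => LinearMap.ext fun m =>
    LinearMap.congr_fun (congrArg (·.app x) (hf {⟨x, m⟩})) ⟨m, mem_generate_singleton m⟩

end GenerateColimit

lemma exists_app_eq_of_isColimit {J : Type} [SmallCategory J] [IsFiltered J]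
    {D : J ⥤ RMod k A} {c : Cocone D} (hc : IsColimit c) {x : Aᵒᵖ} (v : c.pt.obj.obj x) :
    ∃ j w, (c.ι.app j).app x w = v := by
  let U (j : J) : Submod c.pt := range (c.ι.app j)
  have hU : Directed (· ≤ ·) U := fun i j => ⟨IsFiltered.max i j,
    range_le_range_of_comp_eq (c.w (IsFiltered.leftToMax i j)),
    range_le_range_of_comp_eq (c.w (IsFiltered.rightToMax i j))⟩
  have : Nonempty J := IsFiltered.nonempty
  let Z := directedSup U hU
  let c' : Cocone D :=
    { pt := Z.toRMod
      ι :=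
        { app j := Z.lift (c.ι.app j) fun x w => le_directedSup hU j x ⟨w, rfl⟩
          naturality i j f := (cancel_mono Z.ι).1 (by simp) } }
  have hZ : hc.desc c' ≫ Z.ι = 𝟙 c.pt := hc.hom_ext fun j => by simp [c']
  obtain ⟨j, w, hw⟩ :=
    (mem_directedSup hU).1 (eq_top_of_comp_ι_eq_id hZ ▸ trivial : v ∈ Z.obj x)
  exact ⟨j, w, hw⟩

def adjunctionYonedaEquiv {L R : RMod k A ⥤ RMod k A} (adj : L ⊣ R) (x : A) (V : RMod k A) :
    (L.obj (reprR k A x) ⟶ V) ≃ (R.obj V).obj.obj (op x) :=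
  (adj.homEquiv _ V).trans (yonedaEquiv x (R.obj V))

lemma adjunctionYonedaEquiv_comp {L R : RMod k A ⥤ RMod k A} (adj : L ⊣ R) (x : A)
    {V W : RMod k A} (g : L.obj (reprR k A x) ⟶ V) (f : V ⟶ W) :
    adjunctionYonedaEquiv adj x W (g ≫ f) =
      (R.map f).app (op x) (adjunctionYonedaEquiv adj x V g) := by
  simp only [adjunctionYonedaEquiv, Equiv.trans_apply, Adjunction.homEquiv_naturality_right]
  exact yonedaEquiv_comp _ _

lemma fg_obj_reprR {L R : RMod k A ⥤ RMod k A} (adj : L ⊣ R)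
    [PreservesFilteredColimitsOfSize.{0, 0} R] (x : A) : FG (L.obj (reprR k A x)) := by
  let N := L.obj (reprR k A x)
  let e := adjunctionYonedaEquiv adj x
  obtain ⟨s, w, hw⟩ := exists_app_eq_of_isColimit
    (isColimitOfPreserves R (isColimitGenerateCocone N)) (e N (𝟙 N))
  have hsplit : (e _).symm w ≫ (generate s).ι = 𝟙 N :=
    (e N).injective (by rw [adjunctionYonedaEquiv_comp, Equiv.apply_symm_apply]; exact hw)
  exact ⟨s, eq_top_of_comp_ι_eq_id hsplit⟩

lemma surjective_app_of_injective_comp {M N : RMod k A} (θ : N ⟶ M) (hM : FG M)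
    (h : ∀ S : RMod k A, Simple S → Function.Injective fun s : M ⟶ S => θ ≫ s)
    (x : Aᵒᵖ) :
    Function.Surjective (θ.app x) := by
  have : range θ = ⊤ := by
    by_contra hθ
    obtain ⟨S, s, hS, hs, hθs⟩ := exists_simple_quotient hM hθ
    refine hs (h S hS (show θ ≫ s = θ ≫ 0 from ?_))
    rw [comp_zero, hom_eq_zero_iff]
    exact fun x n => hθs x _ ⟨n, rfl⟩
  exact fun m => eq_top_iff_forall_mem.1 this x m

lemma injective_app_of_surjective_comp {M N : RMod k A} (θ : N ⟶ M) (hN : FG N) {ρ : M ⟶ N}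
    (hρ : ρ ≫ θ = 𝟙 M)
    (h : ∀ S : RMod k A, Simple S → Function.Surjective fun s : M ⟶ S => θ ≫ s)
    (x : Aᵒᵖ) :
    Function.Injective (θ.app x) := by
  let K := ker θ
  have hKθ : K.ι ≫ θ = 0 := (hom_eq_zero_iff _).2 fun _ m => m.2
  let r : N ⟶ K.toRMod := K.lift (𝟙 N - θ ≫ ρ) fun x m => by
    change θ.app x (m - ρ.app x (θ.app x m)) = 0
    rw [map_sub, ← comp_app_apply ρ θ, hρ]
    simp
  have hr : K.ι ≫ r = 𝟙 K.toRMod := (cancel_mono K.ι).1 (by simp [r, reassoc_of% hKθ])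
  have hK : (⊥ : Submod K.toRMod) = ⊤ := by
    by_contra hK
    obtain ⟨S, σ, hS, hσ, -⟩ := exists_simple_quotient (FG.of_comp_eq_id hr hN) hK
    obtain ⟨g, hg⟩ := h S hS (r ≫ σ)
    refine hσ ?_
    rw [← Category.id_comp σ, ← hr, Category.assoc, ← hg, reassoc_of% hKθ, zero_comp]
  refine (injective_iff_map_eq_zero _).2 fun m hm => ?_
  have : (⟨m, hm⟩ : K.obj x) = 0 :=
    (Submodule.mem_bot k).1 (hK ▸ trivial : _ ∈ (⊥ : Submod K.toRMod).obj x)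
  exact congrArg Subtype.val this

theorem isIso_of_bijective_comp_simple {M N : RMod k A} (θ : N ⟶ M) (hM : FG M) (hN : FG N)
    [Projective M]
    (h : ∀ S : RMod k A, Simple S → Function.Bijective fun s : M ⟶ S => θ ≫ s) :
    IsIso θ := by
  have hsurj := surjective_app_of_injective_comp θ hM fun S hS => (h S hS).1
  have : Epi θ := epi_of_surjective θ hsurj
  have hinj := injective_app_of_surjective_comp θ hN (Projective.factorThru_comp (𝟙 M) θ)
    fun S hS => (h S hS).2
  exact isIso_of_bijective θ fun x => ⟨hinj x, hsurj x⟩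

theorem isIso_conjugateEquiv_symm_app_reprR {F G F' G' : RMod k A ⥤ RMod k A}
    (aF : F ⊣ F') (bF : F' ⊣ F) (aG : G ⊣ G') (bG : G' ⊣ G) (η : F ⟶ G)
    (hη : ∀ L : RMod k A, Simple L → IsIso (η.app L)) (x : A) :
    IsIso (((conjugateEquiv bF bG).symm η).app (reprR k A x)) := by
  have := aF.leftAdjoint_preservesColimits
  have := aG.leftAdjoint_preservesColimits
  have := F.preservesEpimorphisms_of_adjunction aF
  have : Projective (F'.obj (reprR k A x)) := bF.map_projective _ inferInstance
  refine isIso_of_bijective_comp_simple _ (fg_obj_reprR bF x) (fg_obj_reprR bG x) fun S hS => ?_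
  have := hη S hS
  exact (bijective_conjugateEquiv_symm_app_comp_iff bF bG η _ S).2
    ((isIso_iff_yoneda_map_bijective (η.app S)).1 inferInstance _)

end RMod

theorem statement_5
    (F G : RMod k A ⥤ RMod k A)
    (hF : IsSweet F) (hG : IsSweet G)
    (η : F ⟶ G)
    (hη : ∀ L : RMod k A, Simple L → IsIso (η.app L)) :
    IsIso η := by
  obtain ⟨F', ⟨bF⟩, ⟨aF⟩⟩ := hF
  obtain ⟨G', ⟨bG⟩, ⟨aG⟩⟩ := hG
  have (V : RMod k A) : IsIso (η.app V) := RMod.isIso_of_bijective _ fun x => by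
    have := RMod.isIso_conjugateEquiv_symm_app_reprR aF bF aG bG η hη x.unop
    rw [RMod.bijective_app_iff (η.app V) x.unop,
      ← bijective_conjugateEquiv_symm_app_comp_iff bF bG η]
    exact (isIso_iff_coyoneda_map_bijective _).1 inferInstance V
  exact NatIso.isIso_of_isIso_app η

end
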